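/- arXiv:1608.06096 — 4 statements merged into one kernel-verified Lean document; each statement's English description precedes it below -/
import Mathlib

section
/- Let n ≥ 2 and let 1 ≤ i < j ≤ n. The set M of pairs {(a,b) : 1 ≤ a < b ≤ n} corresponding to the strictly upper triangular positions of an n×n matrix, restricted to the nilradical determined by block sizes (r_1,…,r_u), has the property that every root (R_k, R_k+1) for 1 ≤ k ≤ u−1 (where R_k = r_1 + ⋯ + r_k) is minimal in M with respect to the relation γ' > γ iff γ' − γ is a positive root; that is, there is no ξ ∈ M with (R_k, R_k+1) > ξ. -/
/-- `γ > ξ` : the difference `γ − ξ` is a positive root of `gl(n)`; for pairs this means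
same first component with a smaller second component, or same second component with a
larger first component (`γ = (i,j)`, `ξ = (a,b)`: `a = i ∧ b < j` or `b = j ∧ i < a`). -/
def rootGT (γ ξ : ℕ × ℕ) : Prop :=
  (γ.1 = ξ.1 ∧ ξ.2 < γ.2) ∨ (γ.2 = ξ.2 ∧ γ.1 < ξ.1)

/-- `R k = r_1 + ⋯ + r_k`, the partial sums of the block sizes. -/
def partialSum (r : ℕ → ℕ) (k : ℕ) : ℕ := ∑ i ∈ Finset.Icc 1 k, r i

/-- The root set `M` of the nilradical determined by block sizes `(r_1, …, r_u)`:
the pairs `(i,j)`, `1 ≤ i < j ≤ n`, such that `i` and `j` lie in different diagonal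
blocks, i.e. there is no `k` with `R_{k-1} < i ≤ j ≤ R_k`. -/
def nilradicalRoots (u : ℕ) (r : ℕ → ℕ) : Set (ℕ × ℕ) :=
  {p | 1 ≤ p.1 ∧ p.1 < p.2 ∧ p.2 ≤ partialSum r u ∧
    ¬ ∃ k, 1 ≤ k ∧ k ≤ u ∧ partialSum r (k - 1) < p.1 ∧ p.2 ≤ partialSum r k}

theorem not_rootGT_self_succ {ξ : ℕ × ℕ} (hξ : ξ.1 < ξ.2) (m : ℕ) :
    ¬ rootGT (m, m + 1) ξ := by
  unfold rootGT
  omega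

theorem superdiagonal_root_minimal_general (u : ℕ) (r : ℕ → ℕ)
    (k : ℕ) :
    ¬ ∃ ξ ∈ nilradicalRoots u r, rootGT (partialSum r k, partialSum r k + 1) ξ := by
  rintro ⟨ξ, hξ, hgt⟩
  exact not_rootGT_self_succ hξ.2.1 _ hgt

/-- Every root `(R_k, R_k + 1)`, `1 ≤ k ≤ u − 1`, is minimal in `M`:
there is no `ξ ∈ M` with `(R_k, R_k + 1) > ξ`. -/
theorem superdiagonal_root_minimal (u : ℕ) (r : ℕ → ℕ)
    (hr : ∀ i, 1 ≤ i → i ≤ u → 0 < r i) (hn : 2 ≤ partialSum r u)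
    (k : ℕ) (hk1 : 1 ≤ k) (hk2 : k ≤ u - 1) :
    ¬ ∃ ξ ∈ nilradicalRoots u r, rootGT (partialSum r k, partialSum r k + 1) ξ :=
  superdiagonal_root_minimal_general u r k
end

section
/- Lemma 2.4 (antidiagonal structure): For block sizes (r_1,…,r_u) with partial sums R_k, the base S of the nilradical root set M contains, for each i with 1 ≤ i ≤ u−1, all roots of the form (R_i − m + 1, R_i + m) for m = 1, 2, …, min(r_i, r_{i+1}); i.e., the roots corresponding to the antidiagonal elements of the superdiagonal block X_{i,i+1} (from the lower-left corner upward) belong to S. -/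
/-- A subset `S ⊆ M` is a base. -/
def IsBase (u : ℕ) (r : ℕ → ℕ) (S : Set (ℕ × ℕ)) : Prop :=
  S ⊆ nilradicalRoots u r ∧
  (∀ γ ∈ S, ∀ ξ ∈ S, γ ≠ ξ → ¬ (rootGT γ ξ ∨ rootGT ξ γ)) ∧
  (∀ γ ∈ nilradicalRoots u r, γ ∉ S → ∃ ξ ∈ S, rootGT γ ξ)

/-! Write `γ n = (R_i − n + 1, R_i + n)`. A root of `M` strictly below `γ n` in its row or in its
column cannot enter the diagonal blocks `i` and `i + 1`, so it stays inside the block `X_{i,i+1}`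
and lies strictly above the antidiagonal root `γ n'` of its own column or row, with `n' < n`.
Since a base is an antichain and every root outside it lies above one of its elements, strong
induction on `n` shows that no such root can lie in `S`, hence `γ n ∈ S`. -/

lemma rootGT_irrefl (γ : ℕ × ℕ) : ¬ rootGT γ γ := by
  rintro (⟨-, h⟩ | ⟨-, h⟩) <;> exact lt_irrefl _ h

lemma IsBase.mem_of_forall_rootGT {u : ℕ} {r : ℕ → ℕ} {S : Set (ℕ × ℕ)} (hS : IsBase u r S)
    {γ : ℕ × ℕ} (hγ : γ ∈ nilradicalRoots u r)
    (h : ∀ ξ ∈ S, rootGT γ ξ → ∃ η ∈ S, rootGT ξ η) : γ ∈ S := by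
  by_contra hγS
  obtain ⟨ξ, hξS, hγξ⟩ := hS.2.2 γ hγ hγS
  obtain ⟨η, hηS, hξη⟩ := h ξ hξS hγξ
  have hne : ξ ≠ η := by
    rintro rfl
    exact rootGT_irrefl ξ hξη
  exact hS.2.1 ξ hξS η hηS hne (Or.inl hξη)

lemma partialSum_mono (r : ℕ → ℕ) : Monotone (partialSum r) :=
  fun _ _ h => Finset.sum_le_sum_of_subset (Finset.Icc_subset_Icc_right h)

lemma partialSum_succ (r : ℕ → ℕ) (k : ℕ) : partialSum r (k + 1) = partialSum r k + r (k + 1) :=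
  Finset.sum_Icc_succ_top (Nat.le_add_left 1 k) r

lemma partialSum_sub_one_add (r : ℕ → ℕ) {k : ℕ} (hk : 1 ≤ k) :
    partialSum r (k - 1) + r k = partialSum r k := by
  simpa [Nat.sub_add_cancel hk] using (partialSum_succ r (k - 1)).symm

/-- The `n`-th root on the antidiagonal of the block `X_{i,i+1}`, counted from its
lower-left corner `(R_i, R_i + 1)`. -/
def antidiagonalRoot (r : ℕ → ℕ) (i n : ℕ) : ℕ × ℕ :=
  (partialSum r i - n + 1, partialSum r i + n)

section Antidiagonal

variable {u : ℕ} {r : ℕ → ℕ} {i n : ℕ}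

lemma antidiagonalRoot_mem_nilradicalRoots (hi1 : 1 ≤ i) (hiu : i + 1 ≤ u) (hn1 : 1 ≤ n)
    (hn : n ≤ min (r i) (r (i + 1))) : antidiagonalRoot r i n ∈ nilradicalRoots u r := by
  have hRu := partialSum_mono r hiu
  have hprev := partialSum_sub_one_add r hi1
  have hsucc := partialSum_succ r i
  simp only [nilradicalRoots, antidiagonalRoot, Set.mem_ofPred_eq]
  refine ⟨by omega, by omega, by omega, ?_⟩
  rintro ⟨k, -, -, hlt, hle⟩
  rcases le_or_gt k i with hki | hik
  · have := partialSum_mono r hki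
    omega
  · have := partialSum_mono r (show i ≤ k - 1 by omega)
    omega

lemma exists_rootGT_antidiagonalRoot_of_rootGT (hi1 : 1 ≤ i) (hiu : i + 1 ≤ u)
    (hn : n ≤ min (r i) (r (i + 1))) {ξ : ℕ × ℕ} (hξ : ξ ∈ nilradicalRoots u r)
    (hγξ : rootGT (antidiagonalRoot r i n) ξ) :
    ∃ n' < n, 1 ≤ n' ∧ rootGT ξ (antidiagonalRoot r i n') := by
  obtain ⟨-, hξlt, -, hξblock⟩ := hξ
  have hprev := partialSum_sub_one_add r hi1
  have hsucc := partialSum_succ r i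
  simp only [antidiagonalRoot, rootGT] at hγξ ⊢
  rcases hγξ with ⟨hrow, hcol⟩ | ⟨hcol, hrow⟩
  · have hout : partialSum r i < ξ.2 := by
      by_contra! hin
      exact hξblock ⟨i, hi1, by omega, by omega, hin⟩
    exact ⟨ξ.2 - partialSum r i, by omega, by omega, Or.inr ⟨by omega, by omega⟩⟩
  · have hout : ξ.1 ≤ partialSum r i := by
      by_contra! hin
      exact hξblock ⟨i + 1, by omega, hiu, by simpa using hin, by omega⟩
    exact ⟨partialSum r i - ξ.1 + 1, by omega, by omega, Or.inl ⟨by omega, by omega⟩⟩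

end Antidiagonal

theorem base_antidiagonal_general (u : ℕ) (r : ℕ → ℕ)
    (S : Set (ℕ × ℕ)) (hS : IsBase u r S)
    (i : ℕ) (hi1 : 1 ≤ i) (hi2 : i ≤ u - 1)
    (m : ℕ) (hm1 : 1 ≤ m) (hm2 : m ≤ min (r i) (r (i + 1))) :
    (partialSum r i - m + 1, partialSum r i + m) ∈ S := by
  have hiu : i + 1 ≤ u := by omega
  change antidiagonalRoot r i m ∈ S
  induction m using Nat.strong_induction_on with
  | _ m ih =>
    refine hS.mem_of_forall_rootGT (antidiagonalRoot_mem_nilradicalRoots hi1 hiu hm1 hm2) ?_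
    intro ξ hξS hγξ
    obtain ⟨m', hm'm, hm'1, hξγ'⟩ :=
      exists_rootGT_antidiagonalRoot_of_rootGT hi1 hiu hm2 (hS.1 hξS) hγξ
    exact ⟨_, ih m' hm'm hm'1 (hm'm.le.trans hm2), hξγ'⟩

/-- Antidiagonal structure of the base in superdiagonal blocks: for each `i`,
`1 ≤ i ≤ u − 1`, the base contains the roots `(R_i − m + 1, R_i + m)` for
`m = 1, …, min(r_i, r_{i+1})`, i.e. the antidiagonal of the block `X_{i,i+1}`. -/
theorem base_antidiagonal (u : ℕ) (r : ℕ → ℕ) (hr : ∀ i, 1 ≤ i → i ≤ u → 0 < r i)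
    (S : Set (ℕ × ℕ)) (hS : IsBase u r S)
    (i : ℕ) (hi1 : 1 ≤ i) (hi2 : i ≤ u - 1)
    (m : ℕ) (hm1 : 1 ≤ m) (hm2 : m ≤ min (r i) (r (i + 1))) :
    (partialSum r i - m + 1, partialSum r i + m) ∈ S :=
  base_antidiagonal_general u r S hS i hi1 hi2 m hm1 hm2
end

section
/- For block sizes (2,3,2) (so n = 7), the rational function A = (L_{(3,7)} L_{(4,6)}) / (L_{(3,6)} M_{(1,4)} M_{(4,7)}) is invariant under conjugation by all invertible upper-triangular 7×7 matrices, where L_{(3,6)} = x_{2,3}x_{3,6} + x_{2,4}x_{4,6} + x_{2,5}x_{5,6}, L_{(3,7)} = x_{2,3}·det[[x_{3,6},x_{3,7}],[x_{5,6},x_{5,7}]] + x_{2,4}·det[[x_{4,6},x_{4,7}],[x_{5,6},x_{5,7}]], L_{(4,6)} = det[[x_{1,3},x_{1,4}],[x_{2,3},x_{2,4}]]·x_{4,6} + det[[x_{1,3},x_{1,5}],[x_{2,3},x_{2,5}]]·x_{5,6}, M_{(1,4)} = det[[x_{1,3},x_{1,4}],[x_{2,3},x_{2,4}]], M_{(4,7)}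 = det[[x_{4,6},x_{4,7}],[x_{5,6},x_{5,7}]]. -/
/-!
On the nilradical, `X * X` is supported in the rows of the first block and the columns of the last
one, and the five polynomials are `2 × 2` minors built from `X` and `X * X`:
`L36 = (X²)₁₅`, `L37 = (X²)₁₅ X₄₆ - (X²)₁₆ X₄₅`, `L46 = X₀₂ (X²)₁₅ - X₁₂ (X²)₀₅` (0-based indices).
Conjugation by an upper triangular `g` with upper triangular inverse `h` sends `X` to `g X h` and
`X²` to `g X² h`. Because of the block supports, each of these minors only sees the diagonal of
`g` and `h`, so it gets multiplied by a product of diagonal entries. Numerator and denominator of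
`A` pick up the same factor, since `h₃₃ g₃₃ = 1`.
-/

open Matrix

/-- Block map for the block sizes `(2,3,2)` of `gl(7)`: blocks `{1,2}, {3,4,5}, {6,7}`. -/
def blk7 (i : Fin 7) : ℕ := if (i : ℕ) < 2 then 0 else if (i : ℕ) < 5 then 1 else 2

def L36 {K : Type*} [Field K] (X : Matrix (Fin 7) (Fin 7) K) : K :=
  X 1 2 * X 2 5 + X 1 3 * X 3 5 + X 1 4 * X 4 5

def L37 {K : Type*} [Field K] (X : Matrix (Fin 7) (Fin 7) K) : K :=
  X 1 2 * (X 2 5 * X 4 6 - X 2 6 * X 4 5) + X 1 3 * (X 3 5 * X 4 6 - X 3 6 * X 4 5)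

def L46 {K : Type*} [Field K] (X : Matrix (Fin 7) (Fin 7) K) : K :=
  (X 0 2 * X 1 3 - X 0 3 * X 1 2) * X 3 5 + (X 0 2 * X 1 4 - X 0 4 * X 1 2) * X 4 5

def M14 {K : Type*} [Field K] (X : Matrix (Fin 7) (Fin 7) K) : K :=
  X 0 2 * X 1 3 - X 0 3 * X 1 2

def M47 {K : Type*} [Field K] (X : Matrix (Fin 7) (Fin 7) K) : K :=
  X 3 5 * X 4 6 - X 3 6 * X 4 5

namespace Matrix

variable {n R : Type*}

/-- For `d = 1` these are the matrices of the nilradical of the parabolic subalgebra with block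
map `blk`; for monotone `blk`, upper triangular matrices are the case `d = 0`. -/
def BlockUpper [Zero R] (blk : n → ℕ) (d : ℕ) (M : Matrix n n R) : Prop :=
  ∀ i j, blk j < blk i + d → M i j = 0

theorem BlockTriangular.blockUpper_zero [Zero R] [LinearOrder n] {blk : n → ℕ} {g : Matrix n n R}
    (hblk : Monotone blk) (hg : g.BlockTriangular id) : g.BlockUpper blk 0 :=
  fun _ _ hab => hg (lt_of_not_ge fun hab' => (hblk hab').not_gt hab)

section Semiring

variable [Semiring R]

theorem BlockUpper.mul [Fintype n] {blk : n → ℕ} {d e : ℕ} {M N : Matrix n n R}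
    (hM : M.BlockUpper blk d) (hN : N.BlockUpper blk e) : (M * N).BlockUpper blk (d + e) := by
  intro i j hij
  rw [mul_apply]
  refine Finset.sum_eq_zero fun k _ => ?_
  by_cases hk : blk k < blk i + d
  · rw [hM i k hk, zero_mul]
  · rw [hN k j (by omega), mul_zero]

variable [LinearOrder n] {g h N : Matrix n n R} {i i' j j' : n}

variable [Fintype n]

theorem BlockTriangular.mul_apply_eq_diag_mul (hg : g.BlockTriangular id)
    (hN : ∀ a, i < a → N a j = 0) : (g * N) i j = g i i * N i j := by
  rw [mul_apply, Fintype.sum_eq_single i fun a ha => ?_]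
  rcases ha.lt_or_gt with ha | ha
  · rw [hg ha, zero_mul]
  · rw [hN a ha, mul_zero]

theorem BlockTriangular.mul_apply_eq_diag_mul_add (hg : g.BlockTriangular id) (hii' : i < i')
    (hN : ∀ a, i < a → a ≠ i' → N a j = 0) :
    (g * N) i j = g i i * N i j + g i i' * N i' j := by
  rw [mul_apply, Fintype.sum_eq_add i i' hii'.ne fun a ⟨hai, hai'⟩ => ?_]
  rcases hai.lt_or_gt with ha | ha
  · rw [hg ha, zero_mul]
  · rw [hN a ha hai', mul_zero]

theorem BlockTriangular.mul_apply_eq_mul_diag (hh : h.BlockTriangular id)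
    (hN : ∀ b, b < j → N i b = 0) : (N * h) i j = N i j * h j j := by
  rw [mul_apply, Fintype.sum_eq_single j fun b hb => ?_]
  rcases hb.lt_or_gt with hb | hb
  · rw [hN b hb, zero_mul]
  · rw [hh hb, mul_zero]

theorem BlockTriangular.mul_apply_eq_add_mul_diag (hh : h.BlockTriangular id) (hjj' : j < j')
    (hN : ∀ b, b < j' → b ≠ j → N i b = 0) :
    (N * h) i j' = N i j * h j j' + N i j' * h j' j' := by
  rw [mul_apply, Fintype.sum_eq_add j j' hjj'.ne fun b ⟨hbj, hbj'⟩ => ?_]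
  rcases hbj'.lt_or_gt with hb | hb
  · rw [hN b hb hbj, zero_mul]
  · rw [hh hb, mul_zero]

theorem BlockTriangular.diag_mul_diag_of_mul_eq_one (hh : h.BlockTriangular id)
    (hg : g.BlockTriangular id) (hhg : h * g = 1) (i : n) : h i i * g i i = 1 := by
  rw [← hh.mul_apply_eq_diag_mul (i := i) (j := i) fun a ha => hg ha, hhg, one_apply_eq]

end Semiring

section CommRing

variable [CommRing R] [LinearOrder n] [Fintype n] {g h N N' : Matrix n n R} {i i' j j' : n}

theorem BlockTriangular.mul_minor (hg : g.BlockTriangular id) (hii' : i < i')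
    (hN : ∀ a, i < a → a ≠ i' → N a j = 0) (hN' : ∀ a, i < a → a ≠ i' → N' a j' = 0) :
    (g * N) i j * (g * N') i' j' - (g * N) i' j * (g * N') i j' =
      g i i * g i' i' * (N i j * N' i' j' - N i' j * N' i j') := by
  rw [hg.mul_apply_eq_diag_mul_add hii' hN, hg.mul_apply_eq_diag_mul_add hii' hN',
    hg.mul_apply_eq_diag_mul fun a ha => hN a (hii'.trans ha) ha.ne',
    hg.mul_apply_eq_diag_mul fun a ha => hN' a (hii'.trans ha) ha.ne']
  ring

theorem BlockTriangular.minor_mul (hh : h.BlockTriangular id) (hjj' : j < j')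
    (hN : ∀ b, b < j' → b ≠ j → N i b = 0) (hN' : ∀ b, b < j' → b ≠ j → N' i' b = 0) :
    (N * h) i j * (N' * h) i' j' - (N * h) i j' * (N' * h) i' j =
      h j j * h j' j' * (N i j * N' i' j' - N i j' * N' i' j) := by
  rw [hh.mul_apply_eq_add_mul_diag hjj' hN, hh.mul_apply_eq_add_mul_diag hjj' hN',
    hh.mul_apply_eq_mul_diag fun b hb => hN b (hb.trans hjj') hb.ne,
    hh.mul_apply_eq_mul_diag fun b hb => hN' b (hb.trans hjj') hb.ne]
  ring

end CommRing

end Matrix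

section Blocks232

variable {K : Type*} [Field K] {X : Matrix (Fin 7) (Fin 7) K}

theorem blk7_monotone : Monotone blk7 := by
  unfold Monotone; decide

theorem L36_eq (hX : X.BlockUpper blk7 1) : L36 X = (X * X) 1 5 := by
  simp (disch := decide) only [L36, mul_apply, Fin.sum_univ_seven, hX _ _]
  ring

theorem L37_eq (hX : X.BlockUpper blk7 1) :
    L37 X = (X * X) 1 5 * X 4 6 - (X * X) 1 6 * X 4 5 := by
  simp (disch := decide) only [L37, mul_apply, Fin.sum_univ_seven, hX _ _]
  ring

theorem L46_eq (hX : X.BlockUpper blk7 1) :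
    L46 X = X 0 2 * (X * X) 1 5 - X 1 2 * (X * X) 0 5 := by
  simp (disch := decide) only [L46, mul_apply, Fin.sum_univ_seven, hX _ _]
  ring

variable {g h : Matrix (Fin 7) (Fin 7) K}

theorem conj_blockUpper (hg : g.BlockTriangular id) (hh : h.BlockTriangular id)
    (hX : X.BlockUpper blk7 1) : (g * X * h).BlockUpper blk7 1 :=
  ((hg.blockUpper_zero blk7_monotone).mul hX).mul (hh.blockUpper_zero blk7_monotone)

theorem conj_mul_conj (hhg : h * g = 1) : g * X * h * (g * X * h) = g * (X * X * h) := by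
  simp only [Matrix.mul_assoc, ← Matrix.mul_assoc h g, hhg, Matrix.one_mul]

theorem L36_conj (hg : g.BlockTriangular id) (hh : h.BlockTriangular id) (hhg : h * g = 1)
    (hX : X.BlockUpper blk7 1) : L36 (g * X * h) = g 1 1 * h 5 5 * L36 X := by
  have hXX := hX.mul hX
  have hXXh := hXX.mul (hh.blockUpper_zero blk7_monotone)
  rw [L36_eq (conj_blockUpper hg hh hX), conj_mul_conj hhg,
    hg.mul_apply_eq_diag_mul fun a ha => hXXh a 5 (by revert a; decide),
    hh.mul_apply_eq_mul_diag fun b hb => hXX 1 b (by revert b; decide), L36_eq hX]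
  ring

theorem L37_conj (hg : g.BlockTriangular id) (hh : h.BlockTriangular id) (hhg : h * g = 1)
    (hX : X.BlockUpper blk7 1) : L37 (g * X * h) = g 1 1 * g 4 4 * h 5 5 * h 6 6 * L37 X := by
  have hh0 := hh.blockUpper_zero blk7_monotone
  have hXX := hX.mul hX
  have hXh := hX.mul hh0
  have hXXh := hXX.mul hh0
  have hright := hh.minor_mul (N := X * X) (N' := X) (i := 1) (i' := 4) (j := 5) (j' := 6)
    (by decide) (fun b hb _ => hXX 1 b (by revert b; decide))
    (fun b hb _ => hX 4 b (by revert b; decide))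
  rw [L37_eq (conj_blockUpper hg hh hX), conj_mul_conj hhg, Matrix.mul_assoc g X h,
    hg.mul_apply_eq_diag_mul (i := 1) (j := 5) fun a ha => hXXh a 5 (by revert a; decide),
    hg.mul_apply_eq_diag_mul (i := 1) (j := 6) fun a ha => hXXh a 6 (by revert a; decide),
    hg.mul_apply_eq_diag_mul (i := 4) (j := 5) fun a ha => hXh a 5 (by revert a; decide),
    hg.mul_apply_eq_diag_mul (i := 4) (j := 6) fun a ha => hXh a 6 (by revert a; decide),
    L37_eq hX]
  linear_combination g 1 1 * g 4 4 * hright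

theorem L46_conj (hg : g.BlockTriangular id) (hh : h.BlockTriangular id) (hhg : h * g = 1)
    (hX : X.BlockUpper blk7 1) : L46 (g * X * h) = g 0 0 * g 1 1 * h 2 2 * h 5 5 * L46 X := by
  have hh0 := hh.blockUpper_zero blk7_monotone
  have hXX := hX.mul hX
  have hleft := hg.mul_minor (N := X * h) (N' := X * X * h) (i := 0) (i' := 1) (j := 2) (j' := 5)
    (by decide) (fun a ha _ => (hX.mul hh0) a 2 (by revert a; decide))
    (fun a ha _ => (hXX.mul hh0) a 5 (by revert a; decide))
  rw [L46_eq (conj_blockUpper hg hh hX), conj_mul_conj hhg, Matrix.mul_assoc g X h, hleft,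
    hh.mul_apply_eq_mul_diag (i := 0) (j := 2) fun b hb => hX 0 b (by revert b; decide),
    hh.mul_apply_eq_mul_diag (i := 1) (j := 2) fun b hb => hX 1 b (by revert b; decide),
    hh.mul_apply_eq_mul_diag (i := 0) (j := 5) fun b hb => hXX 0 b (by revert b; decide),
    hh.mul_apply_eq_mul_diag (i := 1) (j := 5) fun b hb => hXX 1 b (by revert b; decide),
    L46_eq hX]
  ring

theorem M14_conj (hg : g.BlockTriangular id) (hh : h.BlockTriangular id)
    (hX : X.BlockUpper blk7 1) : M14 (g * X * h) = g 0 0 * g 1 1 * h 2 2 * h 3 3 * M14 X := by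
  have hXh := hX.mul (hh.blockUpper_zero blk7_monotone)
  have hleft := hg.mul_minor (N := X * h) (N' := X * h) (i := 0) (i' := 1) (j := 2) (j' := 3)
    (by decide) (fun a ha _ => hXh a 2 (by revert a; decide))
    (fun a ha _ => hXh a 3 (by revert a; decide))
  have hright := hh.minor_mul (N := X) (N' := X) (i := 0) (i' := 1) (j := 2) (j' := 3)
    (by decide) (fun b hb _ => hX 0 b (by revert b; decide))
    (fun b hb _ => hX 1 b (by revert b; decide))
  rw [Matrix.mul_assoc g X h]
  unfold M14
  linear_combination hleft + g 0 0 * g 1 1 * hright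

theorem M47_conj (hg : g.BlockTriangular id) (hh : h.BlockTriangular id)
    (hX : X.BlockUpper blk7 1) : M47 (g * X * h) = g 3 3 * g 4 4 * h 5 5 * h 6 6 * M47 X := by
  have hXh := hX.mul (hh.blockUpper_zero blk7_monotone)
  have hleft := hg.mul_minor (N := X * h) (N' := X * h) (i := 3) (i' := 4) (j := 5) (j' := 6)
    (by decide) (fun a ha _ => hXh a 5 (by revert a; decide))
    (fun a ha _ => hXh a 6 (by revert a; decide))
  have hright := hh.minor_mul (N := X) (N' := X) (i := 3) (i' := 4) (j := 5) (j' := 6)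
    (by decide) (fun b hb _ => hX 3 b (by revert b; decide))
    (fun b hb _ => hX 4 b (by revert b; decide))
  rw [Matrix.mul_assoc g X h]
  unfold M47
  linear_combination hleft + g 3 3 * g 4 4 * hright

end Blocks232

theorem A_37_B_invariant_general {K : Type*} [Field K]
    (X g : Matrix (Fin 7) (Fin 7) K)
    (hX : ∀ a b : Fin 7, ¬ blk7 a < blk7 b → X a b = 0)
    (hg : ∀ a b : Fin 7, b < a → g a b = 0) (hgdet : IsUnit g.det) :
    L37 (g * X * g⁻¹) * L46 (g * X * g⁻¹) /
      (L36 (g * X * g⁻¹) * M14 (g * X * g⁻¹) * M47 (g * X * g⁻¹))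
      = L37 X * L46 X / (L36 X * M14 X * M47 X) := by
  replace hX : X.BlockUpper blk7 1 := fun a b hab => hX a b (by omega)
  replace hg : g.BlockTriangular id := fun a b hab => hg a b hab
  have : Invertible g := g.invertibleOfIsUnitDet hgdet
  have hh := blockTriangular_inv_of_blockTriangular hg
  have hhg : g⁻¹ * g = 1 := nonsing_inv_mul g hgdet
  have hdiag := hh.diag_mul_diag_of_mul_eq_one hg hhg
  rw [L36_conj hg hh hhg hX, L37_conj hg hh hhg hX, L46_conj hg hh hhg hX, M14_conj hg hh hX,
    M47_conj hg hh hX]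
  set c := g 0 0 * g 1 1 ^ 2 * g 4 4 * g⁻¹ 2 2 * g⁻¹ 5 5 ^ 2 * g⁻¹ 6 6
  have hc : c ≠ 0 := by
    simp [c, fun i => right_ne_zero_of_mul_eq_one (hdiag i),
      fun i => left_ne_zero_of_mul_eq_one (hdiag i)]
  calc _ = c * (L37 X * L46 X) / (c * (L36 X * M14 X * M47 X)) := by
        congr 1
        · ring
        · linear_combination c * L36 X * M14 X * M47 X * hdiag 3
    _ = _ := mul_div_mul_left _ _ hc

/-- For block sizes `(2,3,2)`, the rational function
`A = (L_{(3,7)} L_{(4,6)}) / (L_{(3,6)} M_{(1,4)} M_{(4,7)})` is invariant under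
conjugation of the nilradical matrix `X` by any invertible upper-triangular matrix. -/
theorem A_37_B_invariant {K : Type*} [Field K] [CharZero K]
    (X g : Matrix (Fin 7) (Fin 7) K)
    (hX : ∀ a b : Fin 7, ¬ blk7 a < blk7 b → X a b = 0)
    (hg : ∀ a b : Fin 7, b < a → g a b = 0) (hgdet : IsUnit g.det)
    (hden : L36 X * M14 X * M47 X ≠ 0) :
    L37 (g * X * g⁻¹) * L46 (g * X * g⁻¹) /
      (L36 (g * X * g⁻¹) * M14 (g * X * g⁻¹) * M47 (g * X * g⁻¹))
      = L37 X * L46 X / (L36 X * M14 X * M47 X) :=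
  A_37_B_invariant_general X g hX hg hgdet
end

section
/- For block sizes (2,1,3,2) (so n = 8), the five polynomials M_{(2,3)} = x_{2,3}, M_{(3,4)} = x_{3,4}, M_{(6,7)} = x_{6,7}, M_{(5,8)} = det[[x_{5,7},x_{5,8}],[x_{6,7},x_{6,8}]], and M_{(1,5)} = det[[x_{1,3},x_{1,4},x_{1,5}],[x_{2,3},x_{2,4},x_{2,5}],[0,x_{3,4},x_{3,5}]] are each invariant under the conjugation action of the group N of upper unitriangular 8×8 matrices on the nilradical matrix X, and they are algebraically independent over K. -/
/-!
Each of the five polynomials is the minor of `X` on a block of rows `r` and columns `c` such that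
every entry of the nilradical weakly southwest of a position of the block lies inside the block.
Since the upper triangular factors only add multiples of lower rows and of earlier columns, the
`r × c` block of `g X g⁻¹` is then `g_{rr} X_{rc} (g⁻¹)_{cc}` with unitriangular outer factors, so
the minor is unchanged. The five minors take arbitrary prescribed values on suitable sparse
matrices, so a polynomial relation between them vanishes on all of `K⁵`; as `K` is infinite,
the relation is zero.
-/

open Matrix

/-- Block map for the block sizes `(2,1,3,2)` of `gl(8)`:
blocks `{1,2}, {3}, {4,5,6}, {7,8}`. -/
def blk8 (i : Fin 8) : ℕ :=
  if (i : ℕ) < 2 then 0 else if (i : ℕ) < 3 then 1 else if (i : ℕ) < 6 then 2 else 3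

/-- `M_{(2,3)} = x_{2,3}`. -/
def M23 {K : Type*} [Field K] (X : Matrix (Fin 8) (Fin 8) K) : K := X 1 2

/-- `M_{(3,4)} = x_{3,4}`. -/
def M34 {K : Type*} [Field K] (X : Matrix (Fin 8) (Fin 8) K) : K := X 2 3

/-- `M_{(6,7)} = x_{6,7}`. -/
def M67 {K : Type*} [Field K] (X : Matrix (Fin 8) (Fin 8) K) : K := X 5 6

/-- `M_{(5,8)} = det [[x_{5,7}, x_{5,8}], [x_{6,7}, x_{6,8}]]`. -/
def M58 {K : Type*} [Field K] (X : Matrix (Fin 8) (Fin 8) K) : K :=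
  X 4 6 * X 5 7 - X 4 7 * X 5 6

/-- `M_{(1,5)} = det [[x_{1,3}, x_{1,4}, x_{1,5}], [x_{2,3}, x_{2,4}, x_{2,5}],
[0, x_{3,4}, x_{3,5}]]`. -/
def M15 {K : Type*} [Field K] (X : Matrix (Fin 8) (Fin 8) K) : K :=
  (Matrix.of ![![X 0 2, X 0 3, X 0 4], ![X 1 2, X 1 3, X 1 4], ![0, X 2 3, X 2 4]]).det

namespace Matrix

variable {ι κ α R : Type*}

def IsUnitriangular [LT ι] [Zero R] [One R] (g : Matrix ι ι R) : Prop :=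
  g.IsUpperTriangular ∧ ∀ i, g i i = 1

/-- The nilradical of the standard parabolic subalgebra with block map `b`. -/
def IsStrictBlockUpper [LT α] [Zero R] (b : ι → α) (X : Matrix ι ι R) : Prop :=
  ∀ i j, ¬ b i < b j → X i j = 0

section Semiring

variable [Semiring R]

theorem mul_mul_apply_eq_sum [Fintype ι] (g X h : Matrix ι ι R) (i j : ι) :
    (g * X * h) i j = ∑ l, ∑ k, g i k * X k l * h l j := by
  simp only [mul_apply, Finset.sum_mul]

variable [LinearOrder ι] {g X h : Matrix ι ι R}

theorem IsUpperTriangular.le_and_le_of_mul_mul_ne_zero (hg : g.IsUpperTriangular)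
    (hh : h.IsUpperTriangular) {i j k l : ι} (hne : g i k * X k l * h l j ≠ 0) :
    i ≤ k ∧ X k l ≠ 0 ∧ l ≤ j := by
  refine ⟨not_lt.mp fun hki => hne ?_, fun hXkl => hne ?_, not_lt.mp fun hjl => hne ?_⟩
  · rw [hg hki, zero_mul, zero_mul]
  · rw [hXkl, mul_zero, zero_mul]
  · rw [hh hjl, mul_zero]

variable [Fintype ι]

theorem IsStrictBlockUpper.upperTriangular_mul_mul [Preorder α] {b : ι → α} (hb : Monotone b)
    (hX : X.IsStrictBlockUpper b) (hg : g.IsUpperTriangular) (hh : h.IsUpperTriangular) :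
    (g * X * h).IsStrictBlockUpper b := by
  intro i j hij
  rw [mul_mul_apply_eq_sum]
  refine Finset.sum_eq_zero fun l _ => Finset.sum_eq_zero fun k _ => ?_
  by_contra hne
  obtain ⟨hik, hXkl, hlj⟩ := hg.le_and_le_of_mul_mul_ne_zero hh hne
  exact hXkl (hX k l fun hkl => hij ((hb hik).trans_lt (hkl.trans_le (hb hlj))))

/-- A term `g (r a) i * X i j * h j (c b)` of the product can only be nonzero for `r a ≤ i` and
`j ≤ c b`, so `hX` confines the sum defining `(g * X * h) (r a) (c b)` to the block `r × c`. -/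
theorem submatrix_mul_mul_eq_of_upperTriangular [Fintype κ] (hg : g.IsUpperTriangular)
    (hh : h.IsUpperTriangular) {r c : κ → ι} (hr : Function.Injective r)
    (hc : Function.Injective c)
    (hX : ∀ a b i j, r a ≤ i → j ≤ c b → X i j ≠ 0 → i ∈ Set.range r ∧ j ∈ Set.range c) :
    (g * X * h).submatrix r c = g.submatrix r r * X.submatrix r c * h.submatrix c c := by
  ext a b
  have outside :
      ∀ i j, i ∉ Set.range r ∨ j ∉ Set.range c → g (r a) i * X i j * h j (c b) = 0 := by
    intro i j hij
    by_contra hne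
    obtain ⟨hai, hXij, hjb⟩ := hg.le_and_le_of_mul_mul_ne_zero hh hne
    obtain ⟨hi, hj⟩ := hX a b i j hai hjb hXij
    exact hij.elim (· hi) (· hj)
  rw [submatrix_apply, mul_mul_apply_eq_sum, mul_mul_apply_eq_sum]
  refine (Fintype.sum_of_injective c hc _ _ (fun j hj => ?_) fun b' => ?_).symm
  · exact Finset.sum_eq_zero fun i _ => outside i j (Or.inr hj)
  · exact Fintype.sum_of_injective r hr _ _ (fun i hi => outside i _ (Or.inl hi)) fun _ => rfl

end Semiring

section CommRing

variable [LinearOrder ι] [CommRing R] {g : Matrix ι ι R}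

theorem IsUnitriangular.submatrix [LinearOrder κ] {r : κ → ι} (hg : g.IsUnitriangular)
    (hr : StrictMono r) : (g.submatrix r r).IsUnitriangular :=
  ⟨fun _ _ hab => hg.1 (hr hab), fun a => hg.2 (r a)⟩

variable [Fintype ι]

theorem IsUpperTriangular.mul_apply_self {A B : Matrix ι ι R} (hA : A.IsUpperTriangular)
    (hB : B.IsUpperTriangular) (i : ι) : (A * B) i i = A i i * B i i := by
  rw [mul_apply, Finset.sum_eq_single i]
  · intro k _ hki
    rcases hki.lt_or_gt with hki | hik
    · rw [hA hki, zero_mul]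
    · rw [hB hik, mul_zero]
  · simp

variable [DecidableEq ι]

theorem IsUnitriangular.det_eq_one (hg : g.IsUnitriangular) : g.det = 1 := by
  simp [det_of_isUpperTriangular hg.1, hg.2]

theorem IsUnitriangular.inv (hg : g.IsUnitriangular) : g⁻¹.IsUnitriangular := by
  have hu : IsUnit g.det := by rw [hg.det_eq_one]; exact isUnit_one
  have : Invertible g := g.invertibleOfIsUnitDet hu
  have hinv : g⁻¹.IsUpperTriangular := blockTriangular_inv_of_blockTriangular hg.1
  refine ⟨hinv, fun i => ?_⟩
  simpa [hinv.mul_apply_self hg.1, hg.2] using congrFun₂ (nonsing_inv_mul g hu) i i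

theorem det_submatrix_conj_eq [Fintype κ] [LinearOrder κ] [DecidableEq κ] [Preorder α]
    {b : ι → α} {X : Matrix ι ι R} (hX : X.IsStrictBlockUpper b) (hg : g.IsUnitriangular)
    {r c : κ → ι} (hr : StrictMono r) (hc : StrictMono c)
    (hrc : ∀ a b' i j, r a ≤ i → j ≤ c b' → b i < b j → i ∈ Set.range r ∧ j ∈ Set.range c) :
    ((g * X * g⁻¹).submatrix r c).det = (X.submatrix r c).det := by
  rw [submatrix_mul_mul_eq_of_upperTriangular hg.1 hg.inv.1 hr.injective hc.injective
      fun a b' i j hai hjb hXij => hrc a b' i j hai hjb (not_not.mp (mt (hX i j) hXij)),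
    det_mul, det_mul, (hg.submatrix hr).det_eq_one, (hg.inv.submatrix hc).det_eq_one,
    one_mul, mul_one]

end CommRing

end Matrix

theorem algebraicIndependent_of_surjective_eval {ι A R : Type*} [CommRing R] [IsDomain R]
    [Infinite R] {f : ι → A → R} (hf : Function.Surjective fun a i => f i a) :
    AlgebraicIndependent R f := by
  rw [algebraicIndependent_iff]
  intro p hp
  refine MvPolynomial.funext fun x => ?_
  obtain ⟨a, rfl⟩ := hf x
  have := congrArg (Pi.evalAlgHom R (fun _ => R) a) hp
  rw [← AlgHom.comp_apply, MvPolynomial.comp_aeval] at this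
  simpa [MvPolynomial.aeval_eq_eval] using this

section FiveMinors

variable {K : Type*} [Field K]

theorem M23_eq_det (X : Matrix (Fin 8) (Fin 8) K) : M23 X = (X.submatrix ![1] ![2]).det := by
  rw [det_fin_one]; rfl

theorem M34_eq_det (X : Matrix (Fin 8) (Fin 8) K) : M34 X = (X.submatrix ![2] ![3]).det := by
  rw [det_fin_one]; rfl

theorem M67_eq_det (X : Matrix (Fin 8) (Fin 8) K) : M67 X = (X.submatrix ![5] ![6]).det := by
  rw [det_fin_one]; rfl

theorem M58_eq_det (X : Matrix (Fin 8) (Fin 8) K) :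
    M58 X = (X.submatrix ![4, 5] ![6, 7]).det := by
  rw [det_fin_two]; rfl

theorem M15_eq_det {X : Matrix (Fin 8) (Fin 8) K} (hX : X 2 2 = 0) :
    M15 X = (X.submatrix ![0, 1, 2] ![2, 3, 4]).det := by
  rw [M15, det_fin_three, det_fin_three]
  simp [hX]

/-- The unit entries make the `3 × 3` and `2 × 2` blocks of `M15` and `M58` lower triangular. -/
def fiveMinorsWitness (x : Fin 5 → K) : Matrix (Fin 8) (Fin 8) K :=
  x 4 • single 0 2 1 + x 0 • single 1 2 1 + single 1 3 1 + x 1 • single 2 3 1 + single 2 4 1 +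
    x 3 • single 4 6 1 + x 2 • single 5 6 1 + single 5 7 1

theorem fiveMinors_apply_fiveMinorsWitness (x : Fin 5 → K) :
    (fun i => (![M23, M34, M67, M58, M15] : Fin 5 → _) i (fiveMinorsWitness x)) = x := by
  funext i
  fin_cases i <;> simp [fiveMinorsWitness, M23, M34, M67, M58, M15, det_fin_three]

end FiveMinors

/-- For block sizes `(2,1,3,2)`, the five minors `M_{(2,3)}, M_{(3,4)}, M_{(6,7)},
M_{(5,8)}, M_{(1,5)}` are invariant under conjugation of the nilradical matrix by every
upper unitriangular matrix, and they are algebraically independent over `K`. -/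
theorem five_minors_N_invariant_and_independent {K : Type*} [Field K] [CharZero K] :
    (∀ (X g : Matrix (Fin 8) (Fin 8) K),
      (∀ a b : Fin 8, ¬ blk8 a < blk8 b → X a b = 0) →
      (∀ a b : Fin 8, b < a → g a b = 0) → (∀ a : Fin 8, g a a = 1) →
      M23 (g * X * g⁻¹) = M23 X ∧ M34 (g * X * g⁻¹) = M34 X ∧
      M67 (g * X * g⁻¹) = M67 X ∧ M58 (g * X * g⁻¹) = M58 X ∧
      M15 (g * X * g⁻¹) = M15 X) ∧
    AlgebraicIndependent K
      (![M23, M34, M67, M58, M15] : Fin 5 → (Matrix (Fin 8) (Fin 8) K → K)) := by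
  refine ⟨fun X g hX hg hgd => ?_, algebraicIndependent_of_surjective_eval fun x =>
    ⟨fiveMinorsWitness x, fiveMinors_apply_fiveMinorsWitness x⟩⟩
  have hu : g.IsUnitriangular := ⟨fun i j hij => hg i j hij, hgd⟩
  have hconj : (g * X * g⁻¹).IsStrictBlockUpper blk8 :=
    IsStrictBlockUpper.upperTriangular_mul_mul (by decide) hX hu.1 hu.inv.1
  rw [M23_eq_det, M23_eq_det, M34_eq_det, M34_eq_det, M67_eq_det, M67_eq_det, M58_eq_det,
    M58_eq_det, M15_eq_det (hconj 2 2 (by decide)), M15_eq_det (hX 2 2 (by decide))]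
  refine ⟨?_, ?_, ?_, ?_, ?_⟩ <;>
    exact det_submatrix_conj_eq hX hu (by decide) (by decide) (by decide)
end
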